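/- For a regular diagonal H = diag(h₁,...,h_{n+1}) with distinct entries and A in the adjoint orbit of H₀ = diag(n,-1,...,-1), the condition tr(H·[Y,A]) = 0 for all Y ∈ sl(n+1,ℂ) holds if and only if A is one of the n+1 diagonal matrices obtained by permuting the entries of H₀; hence f_H has exactly n+1 critical points on the orbit. -/

import Mathlib

open Matrix

private lemma aux_trace_std (m : ℕ) (h : Fin (m+1) → ℂ)
    (A : Matrix (Fin (m+1)) (Fin (m+1)) ℂ) (i j : Fin (m+1)) :
    (Matrix.diagonal h * (Matrix.single j i 1 * A - A * Matrix.single j i 1)).trace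
      = (h j - h i) * A i j := by
  classical
  have h1 : ∀ k, (Matrix.single j i (1:ℂ) * A) k k = if k = j then A i k else 0 := by
    intro k
    by_cases hk : k = j
    · subst hk; simp
    · simp [hk, Matrix.single_mul_apply_of_ne (h := hk)]
  have h2 : ∀ k, (A * Matrix.single j i (1:ℂ)) k k = if k = i then A k j else 0 := by
    intro k
    by_cases hk : k = i
    · subst hk; simp
    · simp [hk, Matrix.mul_single_apply_of_ne (hbj := hk)]
  simp only [Matrix.trace, Matrix.diag, Matrix.diagonal_mul, Matrix.sub_apply, h1, h2,
    mul_sub, Finset.sum_sub_distrib, mul_ite, mul_zero, mul_one]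
  rw [Finset.sum_ite_eq' Finset.univ j, Finset.sum_ite_eq' Finset.univ i]
  simp; ring

private lemma aux_crit_diag (m : ℕ) (h d : Fin (m+1) → ℂ)
    (Y : Matrix (Fin (m+1)) (Fin (m+1)) ℂ) :
    (Matrix.diagonal h * (Y * Matrix.diagonal d - Matrix.diagonal d * Y)).trace = 0 := by
  simp only [Matrix.trace, Matrix.diag, Matrix.diagonal_mul, Matrix.sub_apply,
    Matrix.mul_diagonal]
  exact Finset.sum_eq_zero fun x _ => by ring

private lemma aux_perm (m : ℕ) (d : Fin (m+1) → ℂ) (i : Fin (m+1)) :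
    ∃ P : Matrix (Fin (m+1)) (Fin (m+1)) ℂ, P * P = 1 ∧
      P * Matrix.diagonal d * P = Matrix.diagonal (d ∘ Equiv.swap 0 i) := by
  classical
  set e := Equiv.swap (0 : Fin (m+1)) i
  refine ⟨e.toPEquiv.toMatrix, ?_, ?_⟩
  · rw [← PEquiv.toMatrix_trans, ← Equiv.toPEquiv_trans]
    have he : e.trans e = Equiv.refl _ := by ext x; simp [e]
    rw [he, Equiv.toPEquiv_refl, PEquiv.toMatrix_refl]
  · rw [PEquiv.toMatrix_toPEquiv_mul, PEquiv.mul_toMatrix_toPEquiv,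
      Matrix.submatrix_submatrix]
    have hs : e.symm = e := by ext x; simp [e, Equiv.symm_swap]
    rw [hs]
    simp only [Function.comp_id, Function.id_comp]
    exact Matrix.submatrix_diagonal d e e.injective

/-- For regular diagonal `H` and `A` in the adjoint orbit of `diag(n,-1,...,-1)`, `A` is a
critical point of `f_H` iff `A` is one of the `n+1` diagonal permutations of `H₀`; hence
`f_H` has exactly `n+1` critical points on the orbit. -/
theorem critical_points_general (n : ℕ) (hn : 1 ≤ n)
    (h : Fin (n + 1) → ℂ) (hreg : Function.Injective h)
    (H₀ : Matrix (Fin (n + 1)) (Fin (n + 1)) ℂ)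
    (hH₀ : H₀ = Matrix.diagonal (fun i => if i = 0 then (n : ℂ) else -1))
    (orbit : Set (Matrix (Fin (n + 1)) (Fin (n + 1)) ℂ))
    (horbit : orbit = {A | ∃ g : GL (Fin (n + 1)) ℂ,
      A = (g : Matrix (Fin (n + 1)) (Fin (n + 1)) ℂ) * H₀ *
        ((g⁻¹ : GL (Fin (n + 1)) ℂ) : Matrix (Fin (n + 1)) (Fin (n + 1)) ℂ)}) :
    (∀ A ∈ orbit,
      ((∀ Y : Matrix (Fin (n + 1)) (Fin (n + 1)) ℂ, Y.trace = 0 →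
          (Matrix.diagonal h * (Y * A - A * Y)).trace = 0) ↔
        ∃ i : Fin (n + 1), A = Matrix.diagonal (fun j => if j = i then (n : ℂ) else -1))) ∧
      {A ∈ orbit | ∀ Y : Matrix (Fin (n + 1)) (Fin (n + 1)) ℂ, Y.trace = 0 →
          (Matrix.diagonal h * (Y * A - A * Y)).trace = 0}.ncard = n + 1 := by
  classical
  subst hH₀ horbit
  set d₀ : Fin (n+1) → ℂ := fun i => if i = 0 then (n : ℂ) else -1 with hd₀
  set H₀ := Matrix.diagonal d₀ with hH₀
  set D : Fin (n+1) → Matrix (Fin (n+1)) (Fin (n+1)) ℂ :=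
    fun i => Matrix.diagonal (fun j => if j = i then (n : ℂ) else -1) with hD
  have hne : (n : ℂ) ≠ -1 := by
    intro hc
    have h0 : ((n : ℂ) + 1) = 0 := by rw [hc]; ring
    exact Nat.cast_add_one_ne_zero (R := ℂ) n h0
  have hn1 : ((n : ℂ) + 1) ≠ 0 := Nat.cast_add_one_ne_zero n
  -- each D i is critical
  have hDcrit : ∀ (i : Fin (n+1)) (Y : Matrix (Fin (n+1)) (Fin (n+1)) ℂ),
      (Matrix.diagonal h * (Y * D i - D i * Y)).trace = 0 := fun i Y =>
    aux_crit_diag n h _ Y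
  -- each D i is in the orbit
  have hDorb : ∀ i : Fin (n+1), ∃ g : GL (Fin (n+1)) ℂ,
      D i = (g : Matrix (Fin (n+1)) (Fin (n+1)) ℂ) * H₀ *
        ((g⁻¹ : GL (Fin (n+1)) ℂ) : Matrix (Fin (n+1)) (Fin (n+1)) ℂ) := by
    intro i
    obtain ⟨P, hP1, hP2⟩ := aux_perm n d₀ i
    refine ⟨⟨P, P, hP1, hP1⟩, ?_⟩
    have hg : ((⟨P, P, hP1, hP1⟩ : GL (Fin (n+1)) ℂ) :
        Matrix (Fin (n+1)) (Fin (n+1)) ℂ) = P := rfl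
    have hg' : (((⟨P, P, hP1, hP1⟩ : GL (Fin (n+1)) ℂ)⁻¹ : GL (Fin (n+1)) ℂ) :
        Matrix (Fin (n+1)) (Fin (n+1)) ℂ) = P := rfl
    have hfun : (d₀ ∘ (Equiv.swap (0:Fin (n+1)) i))
        = fun j => if j = i then (n:ℂ) else -1 := by
      funext j
      have hj : (Equiv.swap (0 : Fin (n+1)) i) j = 0 ↔ j = i :=
        ⟨fun hc => (Equiv.swap (0:Fin (n+1)) i).injective
          (hc.trans (Equiv.swap_apply_right (0:Fin (n+1)) i).symm),
         fun hc => hc ▸ Equiv.swap_apply_right (0:Fin (n+1)) i⟩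
      simp only [Function.comp_apply, hd₀]
      by_cases hji : j = i
      · rw [if_pos (hj.mpr hji), if_pos hji]
      · rw [if_neg (fun hc => hji (hj.mp hc)), if_neg hji]
    rw [hg, hg', hP2, hfun]
  -- main iff
  have main : ∀ A ∈ {A | ∃ g : GL (Fin (n + 1)) ℂ,
      A = (g : Matrix (Fin (n + 1)) (Fin (n + 1)) ℂ) * H₀ *
        ((g⁻¹ : GL (Fin (n + 1)) ℂ) : Matrix (Fin (n + 1)) (Fin (n + 1)) ℂ)},
      ((∀ Y : Matrix (Fin (n + 1)) (Fin (n + 1)) ℂ, Y.trace = 0 →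
          (Matrix.diagonal h * (Y * A - A * Y)).trace = 0) ↔
        ∃ i : Fin (n + 1), A = D i) := by
    rintro A ⟨g, hA⟩
    constructor
    · intro hc
      -- A is diagonal
      have hoff : ∀ p q, p ≠ q → A p q = 0 := by
        intro p q hpq
        have htr : (Matrix.single q p (1:ℂ)).trace = 0 :=
          Matrix.trace_single_eq_of_ne q p 1 hpq.symm
        have := hc (Matrix.single q p 1) htr
        rw [aux_trace_std n h A p q] at this
        rcases mul_eq_zero.mp this with h1 | h1
        · exact absurd (hreg (sub_eq_zero.mp h1)) (Ne.symm hpq)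
        · exact h1
      set a : Fin (n+1) → ℂ := fun k => A k k with ha
      have hdiag : A = Matrix.diagonal a := by
        ext p q
        by_cases hpq : p = q
        · subst hpq; simp [Matrix.diagonal_apply_eq, ha]
        · rw [Matrix.diagonal_apply_ne _ hpq]; exact hoff p q hpq
      -- quadratic relation
      set C : Matrix (Fin (n+1)) (Fin (n+1)) ℂ := Matrix.diagonal (fun _ => (n:ℂ)) with hC
      have e1 : (g : Matrix (Fin (n+1)) (Fin (n+1)) ℂ) *
          ((g⁻¹ : GL (Fin (n+1)) ℂ) : Matrix (Fin (n+1)) (Fin (n+1)) ℂ) = 1 := by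
        norm_cast; rw [mul_inv_cancel g]; rfl
      have e2 : ((g⁻¹ : GL (Fin (n+1)) ℂ) : Matrix (Fin (n+1)) (Fin (n+1)) ℂ) *
          (g : Matrix (Fin (n+1)) (Fin (n+1)) ℂ) = 1 := by
        norm_cast; rw [inv_mul_cancel g]; rfl
      have hCconj : (g : Matrix (Fin (n+1)) (Fin (n+1)) ℂ) * C *
          ((g⁻¹ : GL (Fin (n+1)) ℂ) : Matrix (Fin (n+1)) (Fin (n+1)) ℂ) = C := by
        have hCs : C = (n : ℂ) • (1 : Matrix (Fin (n+1)) (Fin (n+1)) ℂ) := by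
          ext p q
          by_cases hpq : p = q
          · subst hpq; simp [hC]
          · simp [hC, Matrix.diagonal_apply_ne _ hpq, Matrix.one_apply_ne hpq]
        rw [hCs, Matrix.mul_smul, Matrix.smul_mul, Matrix.mul_one, e1]
      have hq0 : (H₀ - C) * (H₀ + 1) = 0 := by
        rw [hH₀, hC, ← Matrix.diagonal_one, Matrix.diagonal_sub, Matrix.diagonal_add,
          Matrix.diagonal_mul_diagonal]
        rw [show (fun j => (d₀ j - (n:ℂ)) * (d₀ j + 1)) = fun _ => 0 from ?_,
          Matrix.diagonal_zero]
        funext j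
        by_cases hj : j = 0 <;> simp [hd₀, hj] <;> ring
      have hqA : (A - C) * (A + 1) = 0 := by
        have h1 : A - C = (g : Matrix (Fin (n+1)) (Fin (n+1)) ℂ) * (H₀ - C) *
            ((g⁻¹ : GL (Fin (n+1)) ℂ) : Matrix (Fin (n+1)) (Fin (n+1)) ℂ) := by
          rw [hA]; nth_rewrite 1 [← hCconj]; noncomm_ring
        have h2 : A + 1 = (g : Matrix (Fin (n+1)) (Fin (n+1)) ℂ) * (H₀ + 1) *
            ((g⁻¹ : GL (Fin (n+1)) ℂ) : Matrix (Fin (n+1)) (Fin (n+1)) ℂ) := by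
          rw [hA]; nth_rewrite 1 [← e1]; noncomm_ring
        rw [h1, h2]
        calc (g : Matrix (Fin (n+1)) (Fin (n+1)) ℂ) * (H₀ - C) *
              ((g⁻¹ : GL (Fin (n+1)) ℂ) : Matrix (Fin (n+1)) (Fin (n+1)) ℂ) *
              ((g : Matrix (Fin (n+1)) (Fin (n+1)) ℂ) * (H₀ + 1) *
              ((g⁻¹ : GL (Fin (n+1)) ℂ) : Matrix (Fin (n+1)) (Fin (n+1)) ℂ))
            = (g : Matrix (Fin (n+1)) (Fin (n+1)) ℂ) * ((H₀ - C) *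
              ((((g⁻¹ : GL (Fin (n+1)) ℂ) : Matrix (Fin (n+1)) (Fin (n+1)) ℂ) *
              (g : Matrix (Fin (n+1)) (Fin (n+1)) ℂ)) * ((H₀ + 1) *
              ((g⁻¹ : GL (Fin (n+1)) ℂ) : Matrix (Fin (n+1)) (Fin (n+1)) ℂ)))) := by
              noncomm_ring
          _ = 0 := by rw [e2, one_mul, ← Matrix.mul_assoc (H₀ - C), hq0]; simp
      -- entries satisfy the quadratic
      have hroot : ∀ j, a j = (n : ℂ) ∨ a j = -1 := by
        intro j
        have := hqA
        rw [hdiag, hC, ← Matrix.diagonal_one, Matrix.diagonal_sub, Matrix.diagonal_add,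
          Matrix.diagonal_mul_diagonal] at this
        have hj := congrFun (congrFun this j) j
        rw [Matrix.diagonal_apply_eq, Matrix.zero_apply] at hj
        rcases mul_eq_zero.mp hj with h1 | h1
        · exact Or.inl (sub_eq_zero.mp h1)
        · exact Or.inr (eq_neg_of_add_eq_zero_left h1)
      -- trace is zero
      have htrH₀ : H₀.trace = 0 := by
        rw [hH₀, Matrix.trace_diagonal]
        have he : ∀ j : Fin (n+1), d₀ j = (if j = 0 then (n:ℂ)+1 else 0) - 1 := by
          intro j; by_cases hj : j = 0 <;> simp [hd₀, hj]
        rw [Finset.sum_congr rfl fun j _ => he j, Finset.sum_sub_distrib,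
          Finset.sum_ite_eq' Finset.univ (0 : Fin (n+1)), Finset.sum_const,
          Finset.card_univ, Fintype.card_fin]
        simp [nsmul_eq_mul]
      have htrA : ∑ j, a j = 0 := by
        have : A.trace = 0 := by
          rw [hA, Matrix.trace_mul_comm, ← Matrix.mul_assoc]
          norm_cast
          rw [inv_mul_cancel g]
          simpa using htrH₀
        rw [← this, hdiag, Matrix.trace_diagonal]
      -- counting
      set s : Finset (Fin (n+1)) := Finset.univ.filter (fun j => a j = (n:ℂ)) with hs
      have hsplit := Finset.sum_filter_add_sum_filter_not Finset.univ
        (fun j => a j = (n:ℂ)) a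
      have hcards : s.card + (Finset.univ.filter (fun j => ¬ a j = (n:ℂ))).card = n + 1 := by
        rw [Finset.card_filter_add_card_filter_not, Finset.card_univ,
          Fintype.card_fin]
      have hsum1 : ∑ j ∈ s, a j = s.card • (n : ℂ) := by
        rw [Finset.sum_congr rfl (fun j hj => (Finset.mem_filter.mp hj).2),
          Finset.sum_const]
      have hsum2 : ∑ j ∈ Finset.univ.filter (fun j => ¬ a j = (n:ℂ)), a j
          = (Finset.univ.filter (fun j => ¬ a j = (n:ℂ))).card • (-1 : ℂ) := by
        rw [Finset.sum_congr rfl (fun j hj => ?_), Finset.sum_const]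
        rcases hroot j with h1 | h1
        · exact absurd h1 (Finset.mem_filter.mp hj).2
        · exact h1
      have hcard1 : s.card = 1 := by
        have hc : (s.card : ℂ) * ((n:ℂ) + 1) = 1 * ((n:ℂ) + 1) := by
          have hoc : ((Finset.univ.filter (fun j => ¬ a j = (n:ℂ))).card : ℂ)
              = ((n : ℂ) + 1) - s.card := by
            have := congrArg (Nat.cast : ℕ → ℂ) hcards
            push_cast at this
            linear_combination this
          rw [hsum1, hsum2, htrA] at hsplit
          rw [nsmul_eq_mul, nsmul_eq_mul, hoc] at hsplit
          linear_combination hsplit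
        have := mul_right_cancel₀ hn1 hc
        exact_mod_cast this
      obtain ⟨i, hi⟩ := Finset.card_eq_one.mp hcard1
      have hafun : a = fun j => if j = i then (n:ℂ) else -1 := by
        funext j
        by_cases hji : j = i
        · subst hji
          have hjm : j ∈ s := by rw [hi]; exact Finset.mem_singleton_self j
          rw [if_pos rfl]
          exact (Finset.mem_filter.mp hjm).2
        · have hjs : j ∉ s := by rw [hi]; simpa using hji
          rw [if_neg hji]
          rcases hroot j with h1 | h1
          · exact absurd (Finset.mem_filter.mpr ⟨Finset.mem_univ j, h1⟩) hjs
          · exact h1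
      refine ⟨i, ?_⟩
      rw [hdiag, hafun]
    · rintro ⟨i, rfl⟩
      intro Y _
      exact hDcrit i Y
  refine ⟨main, ?_⟩
  have hDinj : Function.Injective D := by
    intro i j hij
    by_contra hij'
    have h2 : D i i i = D j i i := by rw [hij]
    simp only [hD, Matrix.diagonal_apply_eq] at h2
    rw [if_pos trivial, if_neg hij'] at h2
    exact hne h2
  have hset : {A ∈ {A | ∃ g : GL (Fin (n + 1)) ℂ,
      A = (g : Matrix (Fin (n + 1)) (Fin (n + 1)) ℂ) * H₀ *
        ((g⁻¹ : GL (Fin (n + 1)) ℂ) : Matrix (Fin (n + 1)) (Fin (n + 1)) ℂ)} |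
      ∀ Y : Matrix (Fin (n + 1)) (Fin (n + 1)) ℂ, Y.trace = 0 →
        (Matrix.diagonal h * (Y * A - A * Y)).trace = 0} = Set.range D := by
    ext A
    constructor
    · rintro ⟨hAo, hAc⟩
      obtain ⟨i, hi⟩ := (main A hAo).mp hAc
      exact ⟨i, hi.symm⟩
    · rintro ⟨i, rfl⟩
      exact ⟨hDorb i, fun Y _ => hDcrit i Y⟩
  rw [hset, ← Set.image_univ, Set.ncard_image_of_injective _ hDinj, Set.ncard_univ,
    Nat.card_eq_fintype_card, Fintype.card_fin]
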